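/- Define eight plane vectors u₁,…,u₈ with u_{i+4} = −u_i, and let u_{ij} = u_i × u_j. Define the f₁-update v_j = u_{j−1}+u_j+u_{j+1} for j ≡ 1 (mod 4) and v_j = u_j otherwise (indices mod 8), and the g-update v_i = −(u_{i−1}+u_i+u_{i+1}) for all i. If u_{ij} > 0 for all 1 ≤ i < j ≤ 4, then the updated vectors v₁,…,v₄ also satisfy v_i × v_j > 0 for all 1 ≤ i < j ≤ 4, in both the f₁ and the g cases. -/

import Mathlib

/-- Cross product of plane vectors. -/
def cross (u v : ℝ × ℝ) : ℝ := u.1 * v.2 - u.2 * v.1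

/-- The `f₁`-update on an octuple of vectors: `v_j = u_{j-1} + u_j + u_{j+1}` for
`j ≡ 1 (mod 4)` and `v_j = u_j` otherwise. -/
def f1upd (u : ZMod 8 → ℝ × ℝ) : ZMod 8 → ℝ × ℝ :=
  fun j => if j = 1 ∨ j = 5 then u (j - 1) + u j + u (j + 1) else u j

/-- The `g`-update on an octuple of vectors: `v_i = -(u_{i-1} + u_i + u_{i+1})`. -/
def gupd (u : ZMod 8 → ℝ × ℝ) : ZMod 8 → ℝ × ℝ :=
  fun i => -(u (i - 1) + u i + u (i + 1))

/-!
Write `a, b, c, d` for `u₁, …, u₄`, so that `u₀ = -d` and `u₅ = -a`. Up to a common sign, which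
does not change cross products, the updated quadruples are `(a + b - d, b, c, d)` for `f₁` and
`(a + b - d, a + b + c, b + c + d, c + d - a)` for `g`. By bilinearity and antisymmetry, each of
their six cross products expands into a combination of `a × b, …, c × d` with coefficients in
`{0, 1, 2}`, not all zero.
-/

theorem cross_neg_neg (u v : ℝ × ℝ) : cross (-u) (-v) = cross u v := by
  simp only [cross, Prod.fst_neg, Prod.snd_neg]
  ring

def PosOriented (a b c d : ℝ × ℝ) : Prop :=
  0 < cross a b ∧ 0 < cross a c ∧ 0 < cross a d ∧ 0 < cross b c ∧ 0 < cross b d ∧ 0 < cross c d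

theorem forall_cross_pos_iff_posOriented (v : ZMod 8 → ℝ × ℝ) :
    (∀ i j : ℕ, 1 ≤ i → i < j → j ≤ 4 → 0 < cross (v i) (v j)) ↔
      PosOriented (v 1) (v 2) (v 3) (v 4) := by
  constructor
  · intro h
    exact ⟨h 1 2 le_rfl (by norm_num) (by norm_num), h 1 3 le_rfl (by norm_num) (by norm_num),
      h 1 4 le_rfl (by norm_num) le_rfl, h 2 3 (by norm_num) (by norm_num) (by norm_num),
      h 2 4 (by norm_num) (by norm_num) le_rfl, h 3 4 (by norm_num) (by norm_num) le_rfl⟩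
  · rintro ⟨h12, h13, h14, h23, h24, h34⟩ i j hi hij hj
    have hi3 : i ≤ 3 := by omega
    interval_cases i <;> interval_cases j <;> assumption

namespace PosOriented

variable {a b c d : ℝ × ℝ}

theorem neg (h : PosOriented a b c d) : PosOriented (-a) (-b) (-c) (-d) := by
  simpa only [PosOriented, cross_neg_neg] using h

theorem f1_image (h : PosOriented a b c d) : PosOriented (-d + a + b) b c d := by
  obtain ⟨hab, hac, had, hbc, hbd, hcd⟩ := h
  simp only [PosOriented, cross, Prod.fst_add, Prod.snd_add, Prod.fst_neg, Prod.snd_neg] at *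
  refine ⟨?_, ?_, ?_, hbc, hbd, hcd⟩
  · linear_combination hab + hbd
  · linear_combination hac + hbc + hcd
  · linear_combination had + hbd

theorem g_image (h : PosOriented a b c d) :
    PosOriented (-d + a + b) (a + b + c) (b + c + d) (c + d + -a) := by
  obtain ⟨hab, hac, had, hbc, hbd, hcd⟩ := h
  simp only [PosOriented, cross, Prod.fst_add, Prod.snd_add, Prod.fst_neg, Prod.snd_neg] at *
  refine ⟨?_, ?_, ?_, ?_, ?_, ?_⟩
  · linear_combination hac + had + hbc + hbd + hcd
  · linear_combination hab + hac + had + hbc + 2 * hbd + hcd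
  · linear_combination hab + hac + hbc + hbd + hcd
  · linear_combination hab + hac + had + hbd + hcd
  · linear_combination hab + 2 * hac + had + hbc + hbd + hcd
  · linear_combination hab + hac + had + hbc + hbd

end PosOriented

theorem stmt9 (u : ZMod 8 → ℝ × ℝ) (hsym : ∀ i : ZMod 8, u (i + 4) = -u i)
    (hpos : ∀ i j : ℕ, 1 ≤ i → i < j → j ≤ 4 → 0 < cross (u i) (u j)) :
    (∀ i j : ℕ, 1 ≤ i → i < j → j ≤ 4 →
      0 < cross (f1upd u i) (f1upd u j)) ∧
    (∀ i j : ℕ, 1 ≤ i → i < j → j ≤ 4 →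
      0 < cross (gupd u i) (gupd u j)) := by
  have hu0 : u 0 = -u 4 := hsym 4
  have hu5 : u 5 = -u 1 := hsym 1
  have hu := (forall_cross_pos_iff_posOriented u).1 hpos
  refine ⟨(forall_cross_pos_iff_posOriented _).2 ?_, (forall_cross_pos_iff_posOriented _).2 ?_⟩
  · change PosOriented (u 0 + u 1 + u 2) (u 2) (u 3) (u 4)
    simpa only [hu0] using hu.f1_image
  · change PosOriented (-(u 0 + u 1 + u 2)) (-(u 1 + u 2 + u 3)) (-(u 2 + u 3 + u 4))
      (-(u 3 + u 4 + u 5))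
    simpa only [hu0, hu5] using hu.g_image.neg
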